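/- Derivation of the integrable matrix equation (3.50): let c be a complex scalar and let A, B : ℝ → (k×k complex matrices) be twice differentiable functions satisfying Ä = c { Ȧ B + B Ȧ − Ȧ A − A Ȧ } and B̈ = c { Ḃ A + A Ḃ − Ḃ B − B Ḃ }. Set S := A + B and D := A − B. Then: (i) the matrix Ṡ + c D² is constant in time, so there exists a constant matrix C with Ṡ = −c ( D² + C ); (ii) D̈ = −c ( Ṡ D + D Ṡ ); and consequently (iii) D satisfies D̈ = c² ( 2 D³ + C D + D C ). -/

import Mathlib

/-! Adding and subtracting the two equations of (3.52) gives, in `S = A + B` and `D = A − B`,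
`S̈ = −c (Ḋ D + D Ḋ) = −c (D²)˙` and `D̈ = −c (Ṡ D + D Ṡ)`. The first says that `Ṡ + c D²` is a
first integral; inserting `Ṡ = −c (D² + C)` into the second gives (3.50). -/

open Matrix

attribute [local instance] Matrix.normedAddCommGroup Matrix.normedSpace

noncomputable section

theorem HasDerivAt.matrix_mul {𝕜 R l m n : Type*} [NontriviallyNormedField 𝕜] [CompleteSpace 𝕜]
    [NormedRing R] [NormedAlgebra 𝕜 R] [FiniteDimensional 𝕜 R]
    [Fintype l] [Fintype m] [Fintype n]
    {f : 𝕜 → Matrix l m R} {g : 𝕜 → Matrix m n R} {f' : Matrix l m R} {g' : Matrix m n R}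
    {x : 𝕜} (hf : HasDerivAt f f' x) (hg : HasDerivAt g g' x) :
    HasDerivAt (fun t ↦ f t * g t) (f' * g x + f x * g') x := by
  rw [add_comm]
  exact (mulLinearMap 𝕜).toContinuousBilinearMap.hasDerivAt_of_bilinear (fun _ ↦ hf) (fun _ ↦ hg)

section PeriodicReduction

variable {K R : Type*} [CommRing K] [Ring R] [Algebra K R]

/-- Right-hand side of (3.52): `Ä = latticeForce c A B Ȧ` and `B̈ = latticeForce c B A Ḃ`. -/
def latticeForce (c : K) (x y x' : R) : R := c • (x' * y + y * x' - x' * x - x * x')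

theorem latticeForce_add_latticeForce (c : K) (a b a' b' : R) :
    latticeForce c a b a' + latticeForce c b a b' =
      (-c) • ((a' - b') * (a - b) + (a - b) * (a' - b')) := by
  rw [latticeForce, latticeForce, ← smul_add, neg_smul, ← smul_neg]
  congr 1
  noncomm_ring

theorem latticeForce_sub_latticeForce (c : K) (a b a' b' : R) :
    latticeForce c a b a' - latticeForce c b a b' =
      (-c) • ((a' + b') * (a - b) + (a - b) * (a' + b')) := by
  rw [latticeForce, latticeForce, ← smul_sub, neg_smul, ← smul_neg]
  congr 1
  noncomm_ring

theorem neg_smul_anticommutator_of_eq_neg_smul {c : K} {s d C : R}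
    (hs : s = (-c) • (d * d + C)) :
    (-c) • (s * d + d * s) = (c ^ 2) • ((2 : K) • (d * d * d) + C * d + d * C) := by
  rw [hs, smul_mul_assoc, mul_smul_comm, ← smul_add, smul_smul, neg_mul_neg, ← sq, two_smul]
  congr 1
  noncomm_ring

end PeriodicReduction

theorem derivation_of_eq_350 (k : ℕ) (c : ℂ)
    (A A' A'' B B' B'' : ℝ → Matrix (Fin k) (Fin k) ℂ)
    (hA : ∀ t, HasDerivAt A (A' t) t) (hA' : ∀ t, HasDerivAt A' (A'' t) t)
    (hB : ∀ t, HasDerivAt B (B' t) t) (hB' : ∀ t, HasDerivAt B' (B'' t) t)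
    (hAeq : ∀ t, A'' t = c • (A' t * B t + B t * A' t - A' t * A t - A t * A' t))
    (hBeq : ∀ t, B'' t = c • (B' t * A t + A t * B' t - B' t * B t - B t * B' t))
    (S' D D'' : ℝ → Matrix (Fin k) (Fin k) ℂ)
    (hS' : ∀ t, S' t = A' t + B' t)
    (hD : ∀ t, D t = A t - B t)
    (hD'' : ∀ t, D'' t = A'' t - B'' t) :
    (∀ t₁ t₂, S' t₁ + c • (D t₁ * D t₁) = S' t₂ + c • (D t₂ * D t₂)) ∧
    (∀ t, D'' t = (-c) • (S' t * D t + D t * S' t)) ∧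
    (∀ C : Matrix (Fin k) (Fin k) ℂ,
      (∀ t, S' t = (-c) • (D t * D t + C)) →
      ∀ t, D'' t = (c ^ 2) • ((2 : ℂ) • (D t * D t * D t) + C * D t + D t * C)) := by
  obtain rfl : S' = fun t ↦ A' t + B' t := funext hS'
  obtain rfl : D = fun t ↦ A t - B t := funext hD
  have hD''_eq (t : ℝ) :
      D'' t = (-c) • ((A' t + B' t) * (A t - B t) + (A t - B t) * (A' t + B' t)) := by
    rw [hD'', hAeq, hBeq, ← latticeForce, ← latticeForce, latticeForce_sub_latticeForce]
  refine ⟨fun t₁ t₂ ↦ ?_, hD''_eq, fun C hC t ↦ ?_⟩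
  · have hD_deriv (t : ℝ) := (hA t).fun_sub (hB t)
    have hconserved (t : ℝ) :
        HasDerivAt (fun t ↦ A' t + B' t + c • ((A t - B t) * (A t - B t))) 0 t := by
      refine (((hA' t).fun_add (hB' t)).fun_add
        (((hD_deriv t).matrix_mul (hD_deriv t)).const_smul c)).congr_deriv ?_
      rw [hAeq, hBeq, ← latticeForce, ← latticeForce, latticeForce_add_latticeForce, neg_smul,
        neg_add_cancel]
    exact is_const_of_deriv_eq_zero (fun t ↦ (hconserved t).differentiableAt)
      (fun t ↦ (hconserved t).deriv) t₁ t₂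
  · rw [hD''_eq, neg_smul_anticommutator_of_eq_neg_smul (hC t)]
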